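/- arXiv:math/9312212 — 2 statements merged into one kernel-verified Lean document; each statement's English description precedes it below -/
import Mathlib

section
/- Let L be a linear order, B = B(L), and let a₀, a₁, a₂ ∈ B be a homogeneous triple such that the common index ℓ satisfies ℓ ≠ 0 and ℓ+1 ≠ k−1 (i.e., in the homogeneity condition for the pair (a₁, a₂), the endpoints of a₂ lie strictly between two non-extreme endpoints of a₁). Then the symmetric difference a₁ △ a₂ is contained in a single interval J = [σ⃗_{a₀}(ℓ'), σ⃗_{a₀}(ℓ'+1)) determined by a₀, and consequently either a₀·a₁·(−a₂) = 0 or (−a₀)·(−a₁)·a₂ = 0. -/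
universe u

/-- `L⁺ = L ∪ {−∞, ∞}`: the order `L` with adjoined minimum `⊥ = −∞` and maximum `⊤ = ∞`. -/
abbrev LPlus (L : Type u) := WithBot (WithTop L)

/-- The embedding of `L` into `L⁺`. -/
def toPlus {L : Type u} (x : L) : LPlus L := ((x : WithTop L) : WithBot (WithTop L))

/-- The half-open interval `[s, t) = {x ∈ L : s ≤ x < t}` with endpoints in `L⁺`. -/
def seg (L : Type u) [LinearOrder L] (s t : LPlus L) : Set L :=
  {x | s ≤ toPlus x ∧ toPlus x < t}

/-- The interval Boolean algebra `B(L)`: the subalgebra of `P(L)` generated by the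
half-open intervals `[s, t)`, `s, t ∈ L⁺`; equivalently, the collection of finite
unions of such intervals. -/
def IntervalAlgebra (L : Type u) [LinearOrder L] : Set (Set L) :=
  {a | ∃ (n : ℕ) (f : Fin n → LPlus L × LPlus L), a = ⋃ i, seg L (f i).1 (f i).2}

/-- Membership in `L* = {x ∈ L : ∃ y < x} ∪ {−∞, ∞}`, the admissible canonical
endpoints. -/
def InStar (L : Type u) [LinearOrder L] (x : LPlus L) : Prop :=
  x = ⊥ ∨ x = ⊤ ∨ ∃ y : L, toPlus y < x

/-- `⋃_{i<n} [l(2i), l(2i+1))`, the union of consecutive pairs of a list of endpoints. -/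
def pairedUnion (L : Type u) [LinearOrder L] (l : List (LPlus L)) : Set L :=
  {x | ∃ (i : ℕ) (h1 : 2 * i < l.length) (h2 : 2 * i + 1 < l.length),
    l[2 * i] ≤ toPlus x ∧ toPlus x < l[2 * i + 1]}

/-- `l` is the canonical representation of `a`: a strictly increasing even-length list
of endpoints in `L*` with `a = ⋃_{i<n} [l(2i), l(2i+1))`. -/
def CanonRep (L : Type u) [LinearOrder L] (a : Set L) (l : List (LPlus L)) : Prop :=
  Even l.length ∧ l.Chain' (· < ·) ∧ (∀ x ∈ l, InStar L x) ∧ a = pairedUnion L l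

/-- `σ : Fin k → L⁺` is the increasing enumeration of `σ_a`: the endpoints of the
canonical representation `l` of `a` together with `−∞` and `∞`. -/
def IsSigmaEnum (L : Type u) [LinearOrder L] (a : Set L) (k : ℕ)
    (σ : Fin k → LPlus L) (l : List (LPlus L)) : Prop :=
  CanonRep L a l ∧ StrictMono σ ∧
    Set.range σ = insert ⊥ (insert ⊤ {x | x ∈ l})

/-! Every endpoint of `a₁` other than `±∞` lies inside the gap `J = [σ₀(ℓ₀₁), σ₀(ℓ₀₁+1))` of
`a₀`, and so does every such endpoint of `a₂`: by `ℓ₁₂ ≠ 0` and `ℓ₁₂ + 1 ≠ k - 1` the gap of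
`a₁` containing them is bounded by genuine endpoints of `a₁`. Below `J` a point lies in `aᵢ`
iff `−∞` is an endpoint of `aᵢ`, above `J` iff `∞` is one, and both are the same for `a₁` and
`a₂`; hence `a₁ △ a₂ ⊆ J`. No endpoint of `a₀` lies inside `J`, so `J ⊆ a₀` or `J ∩ a₀ = ∅`,
which kills `(−a₀)·(−a₁)·a₂` or `a₀·a₁·(−a₂)` respectively. -/

namespace Fin

lemma le_or_succ_le_of_monotone {α : Type*} [Preorder α] {k : ℕ} {σ : Fin k → α}
    (hσ : Monotone σ) (j : Fin k) {m : ℕ} (hm : m + 1 < k) :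
    σ j ≤ σ ⟨m, Nat.lt_of_succ_lt hm⟩ ∨ σ ⟨m + 1, hm⟩ ≤ σ j := by
  rcases Nat.lt_or_ge m j with h | h
  · exact .inr (hσ (Fin.mk_le_mk.mpr h))
  · exact .inl (hσ (Fin.mk_le_mk.mpr h))

end Fin

section Endpoints

variable {L : Type u} [LinearOrder L]

lemma toPlus_lt_top (x : L) : toPlus x < (⊤ : LPlus L) :=
  WithBot.coe_lt_coe.mpr (WithTop.coe_lt_top x)

lemma IsSigmaEnum.inner_mem {a : Set L} {k : ℕ} {σ : Fin k → LPlus L} {l : List (LPlus L)}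
    (hσ : IsSigmaEnum L a k σ l) {j : Fin k} (hj₀ : 0 < (j : ℕ)) (hj : (j : ℕ) + 1 < k) :
    σ j ∈ l ∧ σ j ≠ ⊥ ∧ σ j ≠ ⊤ := by
  have hbot : σ j ≠ ⊥ := ne_bot_of_gt (hσ.2.1 (show (⟨0, j.pos⟩ : Fin k) < j from hj₀))
  have htop : σ j ≠ ⊤ := ne_top_of_lt (hσ.2.1 (show j < ⟨j + 1, hj⟩ from Nat.lt_succ_self _))
  have hrange : σ j ∈ Set.range σ := Set.mem_range_self _
  rw [hσ.2.2] at hrange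
  rcases hrange with h | h | h
  exacts [absurd h hbot, absurd h htop, ⟨h, hbot, htop⟩]

end Endpoints

section PairedUnion

variable {L : Type u} [LinearOrder L] {l : List (LPlus L)} {x : L}

lemma mem_pairedUnion_iff_bot_mem (he : Even l.length) (hc : l.IsChain (· < ·))
    (hx : ∀ s ∈ l, s ≠ ⊥ → s ≠ ⊤ → toPlus x < s) : x ∈ pairedUnion L l ↔ ⊥ ∈ l := by
  replace hx : ∀ s ∈ l, s ≠ ⊥ → toPlus x < s := fun s hs hbot => by
    by_cases htop : s = ⊤
    exacts [htop ▸ toPlus_lt_top x, hx s hs hbot htop]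
  constructor
  · rintro ⟨i, h₁, -, hle, -⟩
    by_contra hbot
    exact (hx _ (List.getElem_mem h₁) (fun h => hbot (h ▸ List.getElem_mem h₁))).not_ge hle
  · intro hbot
    obtain ⟨j, hj, hjbot⟩ := List.getElem_of_mem hbot
    obtain ⟨i, rfl | rfl⟩ := Nat.even_or_odd' j
    · have h₂ : 2 * i + 1 < l.length := by obtain ⟨n, hn⟩ := he; omega
      have hlt := hc.getElem (2 * i) h₂
      refine ⟨i, hj, h₂, hjbot ▸ bot_le, hx _ (List.getElem_mem h₂) ?_⟩
      exact ne_bot_of_gt (hjbot ▸ hlt)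
    · exact absurd (hjbot ▸ hc.getElem (2 * i) hj) not_lt_bot

lemma mem_pairedUnion_iff_top_mem (he : Even l.length) (hc : l.IsChain (· < ·))
    (hx : ∀ s ∈ l, s ≠ ⊥ → s ≠ ⊤ → s ≤ toPlus x) : x ∈ pairedUnion L l ↔ ⊤ ∈ l := by
  replace hx : ∀ s ∈ l, s ≠ ⊤ → s ≤ toPlus x := fun s hs htop => by
    by_cases hbot : s = ⊥
    exacts [hbot ▸ bot_le, hx s hs hbot htop]
  constructor
  · rintro ⟨i, -, h₂, -, hlt⟩
    by_contra htop
    exact hlt.not_ge (hx _ (List.getElem_mem h₂) (fun h => htop (h ▸ List.getElem_mem h₂)))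
  · intro htop
    obtain ⟨j, hj, hjtop⟩ := List.getElem_of_mem htop
    obtain ⟨i, rfl | rfl⟩ := Nat.even_or_odd' j
    · have h₂ : 2 * i + 1 < l.length := by obtain ⟨n, hn⟩ := he; omega
      exact absurd (hjtop ▸ hc.getElem (2 * i) h₂) not_top_lt
    · have hlt := hc.getElem (2 * i) hj
      refine ⟨i, by omega, hj, hx _ (List.getElem_mem _) ?_, hjtop ▸ toPlus_lt_top x⟩
      exact ne_top_of_lt (hjtop ▸ hlt)

lemma seg_subset_or_disjoint_pairedUnion {s t : LPlus L}
    (hgap : ∀ e ∈ l, e ≤ s ∨ t ≤ e) :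
    seg L s t ⊆ pairedUnion L l ∨ Disjoint (seg L s t) (pairedUnion L l) := by
  refine or_iff_not_imp_right.mpr fun hmeet => ?_
  obtain ⟨x, ⟨hsx, hxt⟩, i, h₁, h₂, hlo, hhi⟩ := Set.not_disjoint_iff.mp hmeet
  have hlo' : l[2 * i] ≤ s := (hgap _ (List.getElem_mem h₁)).resolve_right
    fun h => (h.trans hlo).not_gt hxt
  have hhi' : t ≤ l[2 * i + 1] := (hgap _ (List.getElem_mem h₂)).resolve_left
    fun h => (hsx.trans_lt hhi).not_ge h
  exact fun y ⟨hsy, hyt⟩ => ⟨i, h₁, h₂, hlo'.trans hsy, hyt.trans_le hhi'⟩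

end PairedUnion

lemma CanonRep.symmDiff_subset_seg {L : Type u} [LinearOrder L] {a b : Set L}
    {la lb : List (LPlus L)} (ha : CanonRep L a la) (hb : CanonRep L b lb)
    (hbot : ⊥ ∈ la ↔ ⊥ ∈ lb) (htop : ⊤ ∈ la ↔ ⊤ ∈ lb) {s t : LPlus L}
    (hla : ∀ e ∈ la, e ≠ ⊥ → e ≠ ⊤ → s < e ∧ e < t)
    (hlb : ∀ e ∈ lb, e ≠ ⊥ → e ≠ ⊤ → s < e ∧ e < t) :
    symmDiff a b ⊆ seg L s t := by
  obtain ⟨hea, hca, -, rfl⟩ := ha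
  obtain ⟨heb, hcb, -, rfl⟩ := hb
  intro x hx
  by_contra hxst
  suffices x ∈ pairedUnion L la ↔ x ∈ pairedUnion L lb by
    rcases Set.mem_symmDiff.mp hx with h | h <;> tauto
  rcases not_and_or.mp hxst with hsx | hxt
  · replace hsx := lt_of_not_ge hsx
    rw [mem_pairedUnion_iff_bot_mem hea hca fun e he h₁ h₂ => hsx.trans (hla e he h₁ h₂).1,
      mem_pairedUnion_iff_bot_mem heb hcb fun e he h₁ h₂ => hsx.trans (hlb e he h₁ h₂).1, hbot]
  · replace hxt := le_of_not_gt hxt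
    rw [mem_pairedUnion_iff_top_mem hea hca fun e he h₁ h₂ => ((hla e he h₁ h₂).2.trans_le hxt).le,
      mem_pairedUnion_iff_top_mem heb hcb fun e he h₁ h₂ => ((hlb e he h₁ h₂).2.trans_le hxt).le,
      htop]

lemma Set.inter_compl_eq_empty_or_of_symmDiff_subset {α : Type*} {s t u J : Set α}
    (hJ : symmDiff s t ⊆ J) (hu : J ⊆ u ∨ Disjoint J u) :
    u ∩ s ∩ tᶜ = ∅ ∨ uᶜ ∩ sᶜ ∩ t = ∅ := by
  rcases hu with hJu | hJu
  · refine .inr (Set.eq_empty_of_forall_notMem fun x ⟨⟨hxu, hxs⟩, hxt⟩ => hxu (hJu ?_))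
    exact hJ (Set.mem_symmDiff.mpr (.inr ⟨hxt, hxs⟩))
  · refine .inl (Set.eq_empty_of_forall_notMem fun x ⟨⟨hxu, hxs⟩, hxt⟩ => ?_)
    exact hJu.notMem_of_mem_left (hJ (Set.mem_symmDiff.mpr (.inl ⟨hxs, hxt⟩))) hxu

/-- If `a₀, a₁, a₂` is a homogeneous triple in `B(L)` whose common index
`ℓ = ℓ_{1,2}` satisfies `ℓ ≠ 0` and `ℓ + 1 ≠ k − 1`, then `a₁ △ a₂` is contained in a
single interval `[σ⃗_{a₀}(ℓ'), σ⃗_{a₀}(ℓ'+1))` determined by `a₀`, and consequently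
`a₀·a₁·(−a₂) = 0` or `(−a₀)·(−a₁)·a₂ = 0`. -/
theorem stmt7 (L : Type u) [LinearOrder L] (a : Fin 3 → Set L)
    (k : ℕ) (σ : Fin 3 → Fin k → LPlus L) (l : Fin 3 → List (LPlus L))
    (henum : ∀ i, IsSigmaEnum L (a i) k (σ i) (l i))
    (hends : ∀ i j : Fin 3, ((⊥ : LPlus L) ∈ l i ↔ (⊥ : LPlus L) ∈ l j) ∧
      ((⊤ : LPlus L) ∈ l i ↔ (⊤ : LPlus L) ∈ l j))
    -- the common indices witnessing homogeneity condition (3)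
    (ℓ : Fin 3 → Fin 3 → ℕ)
    (hhom : ∀ i j : Fin 3, i < j → ∃ h : ℓ i j + 1 < k,
      ∀ s ∈ l j, s ≠ ⊥ → s ≠ ⊤ →
        σ i ⟨ℓ i j, by omega⟩ < s ∧ s < σ i ⟨ℓ i j + 1, h⟩)
    -- the endpoints of a₂ fall strictly inside a non-extreme gap of a₁
    (h0 : ℓ 1 2 ≠ 0) (h1 : ℓ 1 2 + 1 ≠ k - 1) :
    (∃ (ℓ' : ℕ) (h : ℓ' + 1 < k),
        symmDiff (a 1) (a 2) ⊆ seg L (σ 0 ⟨ℓ', by omega⟩) (σ 0 ⟨ℓ' + 1, h⟩)) ∧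
    (a 0 ∩ a 1 ∩ (a 2)ᶜ = ∅ ∨ (a 0)ᶜ ∩ (a 1)ᶜ ∩ a 2 = ∅) := by
  obtain ⟨h01, hl1⟩ := hhom 0 1 (by decide)
  obtain ⟨h12, hl2⟩ := hhom 1 2 (by decide)
  obtain ⟨hlo, hlo_bot, hlo_top⟩ := (henum 1).inner_mem (j := ⟨ℓ 1 2, by omega⟩)
    (Nat.pos_of_ne_zero h0) h12
  obtain ⟨hhi, hhi_bot, hhi_top⟩ := (henum 1).inner_mem (j := ⟨ℓ 1 2 + 1, h12⟩)
    (Nat.succ_pos _) (show ℓ 1 2 + 1 + 1 < k by omega)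
  have hl2' : ∀ s ∈ l 2, s ≠ ⊥ → s ≠ ⊤ →
      σ 0 ⟨ℓ 0 1, by omega⟩ < s ∧ s < σ 0 ⟨ℓ 0 1 + 1, h01⟩ := fun s hs hbot htop =>
    ⟨(hl1 _ hlo hlo_bot hlo_top).1.trans (hl2 s hs hbot htop).1,
      (hl2 s hs hbot htop).2.trans (hl1 _ hhi hhi_bot hhi_top).2⟩
  have hJ := (henum 1).1.symmDiff_subset_seg (henum 2).1 (hends 1 2).1 (hends 1 2).2 hl1 hl2'
  refine ⟨⟨ℓ 0 1, h01, hJ⟩, Set.inter_compl_eq_empty_or_of_symmDiff_subset hJ ?_⟩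
  obtain ⟨⟨-, -, -, ha0⟩, hmono, hrange⟩ := henum 0
  refine ha0 ▸ seg_subset_or_disjoint_pairedUnion fun e he => ?_
  obtain ⟨j, rfl⟩ : e ∈ Set.range (σ 0) := hrange ▸ Or.inr (Or.inr he)
  exact Fin.le_or_succ_le_of_monotone hmono.monotone j h01
end

section
/- Let κ be an infinite cardinal and for each ζ < κ let B_ζ be an interval Boolean algebra. If a_α ∈ ∏_{ζ<κ} B_ζ for α < (2^κ)^{++}, then there exist α₀ < α₁ < α₂ < α₃ < (2^κ)^{++} such that (a_{α₀} △ a_{α₁}) · (a_{α₂} △ a_{α₃}) = 0. -/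
/-!
Write each `a α ζ` as `⋃ i, [e (2i), e (2i+1))` for an endpoint sequence `e = e α ζ : ℕ → L⁺`
(padding with empty intervals), and colour a pair `(α, β)` by the comparison pattern
`(ζ, m, n) ↦ compare (e α ζ m) (e β ζ n)`; there are `3 ^ κ = 2 ^ κ` colours.
Pigeonholing twice (first for `α < (2^κ)^+` against a fixed `β`, then over `β < (2^κ)^{++}`)
gives `α₀ < α₁ < α₂ < α₃` on which the colouring is constant. Then `α₀, α₂` compare like
`α₁, α₃`, and `α₀, α₃` like `α₁, α₂`, and a point of `(a α₀ △ a α₁) ∩ (a α₂ △ a α₃)` would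
have to lie on both sides of one of these comparisons.
-/

universe u

universe v w

open Cardinal Set

section PairedUnionSeq

variable {L : Type u} [LinearOrder L]

def pairedUnionSeq (e : ℕ → LPlus L) : Set L :=
  ⋃ i, seg L (e (2 * i)) (e (2 * i + 1))

theorem mem_pairedUnionSeq {e : ℕ → LPlus L} {x : L} :
    x ∈ pairedUnionSeq e ↔ ∃ i, e (2 * i) ≤ toPlus x ∧ toPlus x < e (2 * i + 1) := by
  simp [pairedUnionSeq, seg]

theorem exists_eq_pairedUnionSeq {a : Set L} (ha : a ∈ IntervalAlgebra L) :
    ∃ e : ℕ → LPlus L, a = pairedUnionSeq e := by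
  obtain ⟨n, f, rfl⟩ := ha
  refine ⟨fun k => if h : k / 2 < n then
    (if k % 2 = 0 then (f ⟨k / 2, h⟩).1 else (f ⟨k / 2, h⟩).2) else ⊥, ?_⟩
  ext x
  simp only [Set.mem_iUnion, seg, Set.mem_ofPred_eq, mem_pairedUnionSeq]
  constructor
  · rintro ⟨i, hi⟩
    refine ⟨i, ?_⟩
    simpa [Nat.mul_div_cancel_left, Nat.mul_add_div, i.isLt] using hi
  · rintro ⟨i, hi⟩
    by_cases h : i < n
    · exact ⟨⟨i, h⟩, by simpa [Nat.mul_add_div, h] using hi⟩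
    · simp [Nat.mul_add_div, h] at hi

end PairedUnionSeq

section Compare

variable {α : Type*} [LinearOrder α] {a b c d : α}

theorem lt_iff_lt_of_compare_eq (h : compare a b = compare c d) : a < b ↔ c < d := by
  rw [← compare_lt_iff_lt, h, compare_lt_iff_lt]

theorem gt_iff_gt_of_compare_eq (h : compare a b = compare c d) : b < a ↔ d < c := by
  rw [← compare_gt_iff_gt, h, compare_gt_iff_gt]

end Compare

section Separation

variable {L : Type u} [LinearOrder L] {e₀ e₁ f₀ f₁ : ℕ → LPlus L}

theorem diff_inter_diff_eq_empty_of_compare_eq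
    (h₀₀ : ∀ m n, compare (e₀ m) (f₀ n) = compare (e₁ m) (f₁ n))
    (h₀₁ : ∀ m n, compare (e₀ m) (f₁ n) = compare (e₁ m) (f₀ n)) :
    (pairedUnionSeq e₀ \ pairedUnionSeq e₁) ∩ (pairedUnionSeq f₀ \ pairedUnionSeq f₁) = ∅ := by
  refine Set.eq_empty_of_forall_notMem ?_
  rintro x ⟨⟨hx₀, hx₁⟩, hy₀, hy₁⟩
  simp only [mem_pairedUnionSeq, not_exists, not_and_or, not_le, not_lt] at hx₀ hx₁ hy₀ hy₁
  obtain ⟨i, hp, hq⟩ := hx₀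
  obtain ⟨j, hu, hv⟩ := hy₀
  -- In each case `x` orders an endpoint of `e₁` against one of `f₀`, or one of `e₀` against
  -- one of `f₁`; transported to the other pair by `h₀₀` or `h₀₁`, that order excludes `x`.
  rcases hx₁ i with hp' | hq' <;> rcases hy₁ j with hu' | hv'
  · have := (gt_iff_gt_of_compare_eq (h₀₁ (2 * i) (2 * j))).2 (hu.trans_lt hp')
    exact (hu'.trans this).not_ge hp
  · have := (gt_iff_gt_of_compare_eq (h₀₀ (2 * i) (2 * j + 1))).2 (hv'.trans_lt hp')
    exact (hv.trans this).not_ge hp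
  · have := (lt_iff_lt_of_compare_eq (h₀₀ (2 * i + 1) (2 * j))).2 (hq'.trans_lt hu')
    exact (hq.trans this).not_ge hu
  · have := (lt_iff_lt_of_compare_eq (h₀₁ (2 * i + 1) (2 * j + 1))).2 (hq'.trans_lt hv)
    exact (hq.trans this).not_ge hv'

theorem symmDiff_inter_symmDiff_eq_empty_of_compare_eq
    (h₀₀ : ∀ m n, compare (e₀ m) (f₀ n) = compare (e₁ m) (f₁ n))
    (h₀₁ : ∀ m n, compare (e₀ m) (f₁ n) = compare (e₁ m) (f₀ n)) :
    symmDiff (pairedUnionSeq e₀) (pairedUnionSeq e₁) ∩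
      symmDiff (pairedUnionSeq f₀) (pairedUnionSeq f₁) = ∅ := by
  have h₁₁ : ∀ m n, compare (e₁ m) (f₁ n) = compare (e₀ m) (f₀ n) := fun m n => (h₀₀ m n).symm
  have h₁₀ : ∀ m n, compare (e₁ m) (f₀ n) = compare (e₀ m) (f₁ n) := fun m n => (h₀₁ m n).symm
  simp only [Set.symmDiff_def, Set.union_inter_distrib_right, Set.inter_union_distrib_left,
    diff_inter_diff_eq_empty_of_compare_eq h₀₀ h₀₁, diff_inter_diff_eq_empty_of_compare_eq h₀₁ h₀₀,
    diff_inter_diff_eq_empty_of_compare_eq h₁₀ h₁₁, diff_inter_diff_eq_empty_of_compare_eq h₁₁ h₁₀,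
    Set.union_empty]

end Separation

theorem exists_lt_map_eq_of_lift_mk_lt {ι : Type v} [LinearOrder ι] {X : Type w} {s : Set ι}
    (f : ι → X) (h : lift.{v} #X < lift.{w} #s) : ∃ α ∈ s, ∃ β ∈ s, α < β ∧ f α = f β := by
  by_contra! hf
  have hinj : Function.Injective (s.domRestrict f) := by
    rintro ⟨α, hα⟩ ⟨β, hβ⟩ hαβ
    rcases lt_trichotomy α β with hlt | rfl | hgt
    · exact absurd hαβ (hf α hα β hβ hlt)
    · rfl
    · exact absurd hαβ.symm (hf β hβ α hα hgt)
  exact (lift_mk_le_lift_mk_of_injective hinj).not_gt h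

theorem Cardinal.lift_lt_mk_Ico_ord {θ : Cardinal.{u}} (hθ : ℵ₀ ≤ θ) :
    lift.{u + 1} θ < #(Ico θ.ord (Order.succ θ).ord) := by
  by_contra! h
  have hunion := mk_union_le (Iio θ.ord) (Ico θ.ord (Order.succ θ).ord)
  rw [Iio_union_Ico_eq_Iio (ord_le_ord.2 (Order.le_succ θ)), mk_Iio_ordinal, mk_Iio_ordinal,
    card_ord, card_ord] at hunion
  have : lift.{u + 1} (Order.succ θ) ≤ lift.{u + 1} θ :=
    calc _ ≤ lift.{u + 1} θ + #(Ico θ.ord (Order.succ θ).ord) := hunion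
      _ ≤ lift.{u + 1} θ + lift.{u + 1} θ := add_le_add_right h _
      _ = lift.{u + 1} θ := add_eq_self (by simpa using hθ)
  exact (Order.lt_succ θ).not_ge (lift_le.1 this)

theorem exists_monochromatic_rectangle {C : Type u} {θ : Cardinal.{u}} (hθ : ℵ₀ ≤ θ)
    (hC : #C ≤ θ) (c : Ordinal.{u} → Ordinal.{u} → C) :
    ∃ α₀ α₁ α₂ α₃ : Ordinal.{u}, α₀ < α₁ ∧ α₁ < α₂ ∧ α₂ < α₃ ∧
      α₃ < (Order.succ (Order.succ θ)).ord ∧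
      c α₀ α₂ = c α₀ α₃ ∧ c α₀ α₂ = c α₁ α₂ ∧ c α₀ α₂ = c α₁ α₃ := by
  set ν := (Order.succ θ).ord
  have hν : ℵ₀ ≤ Order.succ θ := hθ.trans (Order.le_succ θ)
  have hCν : #C < Order.succ θ := hC.trans_lt (Order.lt_succ θ)
  have hpair : ∀ β, ∃ α₀ α₁, α₀ < α₁ ∧ α₁ < ν ∧ c α₀ β = c α₁ β := by
    intro β
    obtain ⟨α₀, -, α₁, hα₁, hlt, heq⟩ :=
      exists_lt_map_eq_of_lift_mk_lt (s := Iio ν) (c · β) (by simpa [ν] using hCν)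
    exact ⟨α₀, α₁, hlt, hα₁, heq⟩
  choose p₀ p₁ hp₀₁ hp₁ hp using hpair
  let g : Ordinal.{u} → C × Iio ν × Iio ν := fun β =>
    (c (p₀ β) β, ⟨p₀ β, (hp₀₁ β).trans (hp₁ β)⟩, ⟨p₁ β, hp₁ β⟩)
  have hg : #(C × Iio ν × Iio ν) ≤ lift.{u + 1} (Order.succ θ) := by
    simp only [ν, mk_prod, mk_Iio_ordinal, card_ord, lift_id, ← lift_mul, lift_lift, lift_le]
    calc #C * (Order.succ θ * Order.succ θ) ≤ Order.succ θ * (Order.succ θ * Order.succ θ) :=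
          mul_le_mul_left hCν.le _
      _ = Order.succ θ := by rw [mul_eq_self hν, mul_eq_self hν]
  obtain ⟨β₂, ⟨hβ₂, -⟩, β₃, ⟨-, hβ₃⟩, hβ, hgβ⟩ :=
    exists_lt_map_eq_of_lift_mk_lt (s := Ico ν (Order.succ (Order.succ θ)).ord) g
      (by simpa using hg.trans_lt (lift_lt_mk_Ico_ord hν))
  simp only [g, Prod.mk.injEq, Subtype.ext_iff] at hgβ
  obtain ⟨hc, h₀, h₁⟩ := hgβ
  have h₃ := hp β₃
  rw [← h₀] at hc h₃
  rw [← h₁] at h₃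
  exact ⟨p₀ β₂, p₁ β₂, β₂, β₃, hp₀₁ β₂, (hp₁ β₂).trans_le hβ₂, hβ, hβ₃, hc, hp β₂, hc.trans h₃⟩

theorem Cardinal.mk_prod_nat_nat_arrow_ordering {T : Type u} [Infinite T] :
    #(T × ℕ × ℕ → Ordering) = 2 ^ #T := by
  have hT : ℵ₀ ≤ #T := infinite_iff.1 ‹_›
  simp only [mk_arrow, mk_prod, mk_fintype, lift_natCast, mk_nat, lift_aleph0, lift_id,
    lift_uzero, aleph0_mul_aleph0, mul_aleph0_eq hT]
  exact nat_power_eq hT (by decide)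

/-- Claim 1.10: For interval Boolean algebras `B ζ = B(I ζ)`, `ζ < κ`,
and any family `{a α : α < (2^κ)^{++}}` in `∏_{ζ<κ} B ζ`, there are
`α₀ < α₁ < α₂ < α₃ < (2^κ)^{++}` with `(a α₀ △ a α₁) · (a α₂ △ a α₃) = 0`. -/
theorem stmt13 (κ : Cardinal.{u}) (hκ : Cardinal.aleph0 ≤ κ)
    (I : (Cardinal.ord κ).ToType → Type u) [∀ ζ, LinearOrder (I ζ)]
    (a : Ordinal.{u} → ∀ ζ, Set (I ζ))
    (ha : ∀ α < (Order.succ (Order.succ ((2 : Cardinal.{u}) ^ κ))).ord,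
      ∀ ζ, a α ζ ∈ IntervalAlgebra (I ζ)) :
    ∃ α₀ α₁ α₂ α₃ : Ordinal.{u},
      α₀ < α₁ ∧ α₁ < α₂ ∧ α₂ < α₃ ∧
      α₃ < (Order.succ (Order.succ ((2 : Cardinal.{u}) ^ κ))).ord ∧
      ∀ ζ, symmDiff (a α₀ ζ) (a α₁ ζ) ∩ symmDiff (a α₂ ζ) (a α₃ ζ) = ∅ := by
  set μ := (Order.succ (Order.succ ((2 : Cardinal.{u}) ^ κ))).ord
  have hrep : ∀ α ζ, ∃ e : ℕ → LPlus (I ζ), α < μ → a α ζ = pairedUnionSeq e := fun α ζ =>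
    if hα : α < μ then (exists_eq_pairedUnionSeq (ha α hα ζ)).imp fun _ he _ => he
    else ⟨fun _ => ⊥, fun h => absurd h hα⟩
  choose e he using hrep
  have : Infinite (Cardinal.ord κ).ToType := by
    rw [infinite_iff, mk_toType, card_ord]
    exact hκ
  obtain ⟨α₀, α₁, α₂, α₃, hα₀₁, hα₁₂, hα₂₃, hα₃, h₀₃, h₁₂, h₁₃⟩ :=
    exists_monochromatic_rectangle (hκ.trans (cantor κ).le)
      (by rw [mk_prod_nat_nat_arrow_ordering, mk_toType, card_ord])
      fun α β (p : (Cardinal.ord κ).ToType × ℕ × ℕ) => compare (e α p.1 p.2.1) (e β p.1 p.2.2)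
  refine ⟨α₀, α₁, α₂, α₃, hα₀₁, hα₁₂, hα₂₃, hα₃, fun ζ => ?_⟩
  have hμ : ∀ {α}, α ≤ α₃ → α < μ := fun h => h.trans_lt hα₃
  rw [he α₀ ζ (hμ (hα₀₁.trans (hα₁₂.trans hα₂₃)).le), he α₁ ζ (hμ (hα₁₂.trans hα₂₃).le),
    he α₂ ζ (hμ hα₂₃.le), he α₃ ζ hα₃]
  exact symmDiff_inter_symmDiff_eq_empty_of_compare_eq (fun m n => congrFun h₁₃ (ζ, m, n))
    (fun m n => congrFun (h₀₃.symm.trans h₁₂) (ζ, m, n))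
end
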